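/- arXiv:1608.03820 — 4 statements merged into one kernel-verified Lean document; each statement's English description precedes it below -/
import Mathlib

section
/- For any finite field F_Q of order Q and any γ ∈ [0,1], the optimal classical winning probability of the CHSH_Q^γ game (where each player independently receives 0 with probability γ and each nonzero element with probability (1-γ)/(Q-1), they output a,b ∈ F_Q without communicating, and win iff a+b = x·y) is at least the optimal classical winning probability of the standard CHSH_Q game (uniform inputs). -/
open Finset

/-- Winning probability of a deterministic CHSH_Q strategy (uniform inputs). -/
noncomputable def chshProb (F : Type*) [Field F] [Fintype F] [DecidableEq F]
    (s1 s2 : F → F) : ℝ :=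
  ((Finset.univ.filter (fun p : F × F => s1 p.1 + s2 p.2 = p.1 * p.2)).card : ℝ) /
    (Fintype.card F : ℝ) ^ 2

/-- The classical value of the CHSH_Q game. -/
noncomputable def omegaCHSH (F : Type*) [Field F] [Fintype F] [DecidableEq F] : ℝ :=
  sSup {p : ℝ | ∃ s1 s2 : F → F, p = chshProb F s1 s2}

/-- The biased input distribution of CHSH_Q^γ: 0 with probability γ, each nonzero element
with probability (1-γ)/(Q-1). -/
noncomputable def biasedWeight (F : Type*) [Field F] [Fintype F] [DecidableEq F]
    (γ : ℝ) (x : F) : ℝ :=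
  if x = 0 then γ else (1 - γ) / ((Fintype.card F : ℝ) - 1)

/-- Winning probability of a deterministic strategy in the game CHSH_Q^γ. -/
noncomputable def chshProbBiased (F : Type*) [Field F] [Fintype F] [DecidableEq F]
    (γ : ℝ) (s1 s2 : F → F) : ℝ :=
  ∑ x : F, ∑ y : F, biasedWeight F γ x * biasedWeight F γ y *
    (if s1 x + s2 y = x * y then (1 : ℝ) else 0)

/-- The classical value of the game CHSH_Q^γ. -/
noncomputable def omegaCHSHBiased (F : Type*) [Field F] [Fintype F] [DecidableEq F]
    (γ : ℝ) : ℝ :=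
  sSup {p : ℝ | ∃ s1 s2 : F → F, p = chshProbBiased F γ s1 s2}

/-!
Shifting the inputs of a deterministic strategy `(s₁, s₂)` by `(c, d)` and correcting the outputs
by the terms `-x d - c d` and `-c y` gives a strategy that wins on `(x, y)` exactly when
`(s₁, s₂)` wins on `(x + c, y + d)`. Averaged over all shifts, the winning probability of the
shifted strategy under any product input distribution is the uniform winning probability of
`(s₁, s₂)`, so some shift does at least as well under the biased distribution.
-/

theorem Fintype.sum_comp_sub_left {G M : Type*} [AddGroup G] [Fintype G] [AddCommMonoid M]
    (f : G → M) (u : G) : ∑ c : G, f (u - c) = ∑ x : G, f x :=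
  Fintype.sum_equiv (Equiv.subLeft u) _ _ fun _ => rfl

section ShiftedStrategies

variable {R : Type*} [CommRing R]

def shiftAlice (s : R → R) (c d : R) : R → R := fun x => s (x + c) - x * d - c * d

def shiftBob (s : R → R) (c d : R) : R → R := fun y => s (y + d) - c * y

theorem shift_wins_iff (s₁ s₂ : R → R) (c d x y : R) :
    shiftAlice s₁ c d x + shiftBob s₂ c d y = x * y ↔
      s₁ (x + c) + s₂ (y + d) = (x + c) * (y + d) := by
  unfold shiftAlice shiftBob
  constructor <;> intro h <;> linear_combination h

variable [Fintype R] [DecidableEq R]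

noncomputable def weightedWinProb (w₁ w₂ : R → ℝ) (s₁ s₂ : R → R) : ℝ :=
  ∑ x : R, ∑ y : R, w₁ x * w₂ y * if s₁ x + s₂ y = x * y then 1 else 0

theorem weightedWinProb_shift (w₁ w₂ : R → ℝ) (s₁ s₂ : R → R) (c d : R) :
    weightedWinProb w₁ w₂ (shiftAlice s₁ c d) (shiftBob s₂ c d) =
      ∑ p : R × R, w₁ (p.1 - c) * w₂ (p.2 - d) *
        if s₁ p.1 + s₂ p.2 = p.1 * p.2 then 1 else 0 := by
  rw [Fintype.sum_prod_type]
  refine Fintype.sum_equiv (Equiv.addRight c) _ _ fun x => ?_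
  refine Fintype.sum_equiv (Equiv.addRight d) _ _ fun y => ?_
  simp only [Equiv.coe_addRight, add_sub_cancel_right, shift_wins_iff]
  congr

theorem sum_weightedWinProb_shift {w₁ w₂ : R → ℝ} (hw₁ : ∑ x, w₁ x = 1) (hw₂ : ∑ y, w₂ y = 1)
    (s₁ s₂ : R → R) :
    ∑ c : R, ∑ d : R, weightedWinProb w₁ w₂ (shiftAlice s₁ c d) (shiftBob s₂ c d) =
      #{p : R × R | s₁ p.1 + s₂ p.2 = p.1 * p.2} := by
  calc ∑ c : R, ∑ d : R, weightedWinProb w₁ w₂ (shiftAlice s₁ c d) (shiftBob s₂ c d)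
      = ∑ c : R, ∑ d : R, ∑ p : R × R, w₁ (p.1 - c) * w₂ (p.2 - d) *
          if s₁ p.1 + s₂ p.2 = p.1 * p.2 then 1 else 0 := by
        simp only [weightedWinProb_shift]
    _ = ∑ p : R × R, ∑ c : R, ∑ d : R, w₁ (p.1 - c) * w₂ (p.2 - d) *
          if s₁ p.1 + s₂ p.2 = p.1 * p.2 then 1 else 0 := Finset.sum_comm_cycle
    _ = ∑ p : R × R, (∑ c : R, w₁ (p.1 - c)) * (∑ d : R, w₂ (p.2 - d)) *
          if s₁ p.1 + s₂ p.2 = p.1 * p.2 then 1 else 0 := by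
        simp_rw [Finset.sum_mul_sum, Finset.sum_mul]
    _ = ∑ p : R × R, if s₁ p.1 + s₂ p.2 = p.1 * p.2 then 1 else 0 := by
        simp only [Fintype.sum_comp_sub_left, hw₁, hw₂, one_mul]
    _ = #{p : R × R | s₁ p.1 + s₂ p.2 = p.1 * p.2} := Finset.sum_boole _ _

theorem exists_weightedWinProb_ge {w₁ w₂ : R → ℝ} (hw₁ : ∑ x, w₁ x = 1) (hw₂ : ∑ y, w₂ y = 1)
    (s₁ s₂ : R → R) :
    ∃ t₁ t₂ : R → R, (#{p : R × R | s₁ p.1 + s₂ p.2 = p.1 * p.2} : ℝ) / Fintype.card R ^ 2 ≤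
      weightedWinProb w₁ w₂ t₁ t₂ := by
  have hcard : (Fintype.card R : ℝ) ≠ 0 := Nat.cast_ne_zero.2 Fintype.card_ne_zero
  have hmean : ∑ _cd : R × R, (#{p : R × R | s₁ p.1 + s₂ p.2 = p.1 * p.2} : ℝ) /
      Fintype.card R ^ 2 ≤
      ∑ cd : R × R, weightedWinProb w₁ w₂ (shiftAlice s₁ cd.1 cd.2) (shiftBob s₂ cd.1 cd.2) := by
    rw [Finset.sum_const, Finset.card_univ, Fintype.card_prod, nsmul_eq_mul,
      Fintype.sum_prod_type, sum_weightedWinProb_shift hw₁ hw₂, Nat.cast_mul, ← sq,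
      mul_div_cancel₀ _ (pow_ne_zero 2 hcard)]
  obtain ⟨cd, -, hcd⟩ := Finset.exists_le_of_sum_le Finset.univ_nonempty hmean
  exact ⟨_, _, hcd⟩

end ShiftedStrategies

theorem sum_biasedWeight (F : Type*) [Field F] [Fintype F] [DecidableEq F] (γ : ℝ) :
    ∑ x : F, biasedWeight F γ x = 1 := by
  have hcard : 1 < Fintype.card F := Fintype.one_lt_card
  have hnonzero : ∀ x ∈ ({0}ᶜ : Finset F),
      biasedWeight F γ x = (1 - γ) / ((Fintype.card F : ℝ) - 1) :=
    fun x hx => if_neg (by simpa using hx)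
  rw [Fintype.sum_eq_add_sum_compl 0, Finset.sum_congr rfl hnonzero, Finset.sum_const,
    Finset.card_compl, Finset.card_singleton, nsmul_eq_mul, biasedWeight, if_pos rfl,
    Nat.cast_sub hcard.le, Nat.cast_one]
  have : (Fintype.card F : ℝ) - 1 ≠ 0 := sub_ne_zero.2 (by exact_mod_cast hcard.ne')
  field_simp
  ring

theorem omegaCHSHBiased_ge_omegaCHSH_general (F : Type*) [Field F] [Fintype F] [DecidableEq F]
    (γ : ℝ) :
    omegaCHSH F ≤ omegaCHSHBiased F γ := by
  have hbdd : BddAbove {p | ∃ s₁ s₂ : F → F, p = chshProbBiased F γ s₁ s₂} := by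
    refine ((Set.finite_range fun s : (F → F) × (F → F) => chshProbBiased F γ s.1 s.2).subset
      ?_).bddAbove
    rintro _ ⟨s₁, s₂, rfl⟩
    exact ⟨(s₁, s₂), rfl⟩
  refine csSup_le ⟨_, id, id, rfl⟩ ?_
  rintro _ ⟨s₁, s₂, rfl⟩
  obtain ⟨t₁, t₂, ht⟩ :=
    exists_weightedWinProb_ge (sum_biasedWeight F γ) (sum_biasedWeight F γ) s₁ s₂
  exact ht.trans (le_csSup hbdd ⟨t₁, t₂, rfl⟩)

/-- for any γ ∈ [0,1], ω(CHSH_Q^γ) ≥ ω(CHSH_Q). -/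
theorem omegaCHSHBiased_ge_omegaCHSH (F : Type*) [Field F] [Fintype F] [DecidableEq F]
    (γ : ℝ) (hγ0 : 0 ≤ γ) (hγ1 : γ ≤ 1) :
    omegaCHSH F ≤ omegaCHSHBiased F γ :=
  omegaCHSHBiased_ge_omegaCHSH_general F γ
end

section
/- For the multi-round F_Q bit commitment protocol, the maximal cheating probabilities satisfy g_m ≤ g'_m for all m ≥ 2, where g_m is the maximal cheating probability for the m-round protocol P_m and g'_m is the maximal cheating probability for the symmetrized protocol P'_m. Concretely: let a strategy for P_m be a tuple of functions S = (s_1,...,s_m) with s_1 : F_Q → F_Q and s_i : {0,1} × F_Q^{i-2} × F_Q → F_Q for i ≥ 2 (output y_i depends on d, x_1,...,x_{i-2}, x_i with the convention x_0 = d), with winning condition C_m: y_m = y_{m-1} − x_{m-1}(y_{m-2} − x_{m-2}(... − x_2(y_1 − d·x_1)...)). Let a strategy for P'_m be analogous with winning condition C'_m: y_m = x_m·(y_{m-1} − x_{m-1}(... − x_2(y_1 − d·x_1)...)), where additionally y_m may depend on x_m. Then max over strategies of Pr_{d,x_1,...,x_{m-1}}[C_m] ≤ max over strategies of Pr_{d,x_1,...,x_m}[C'_m],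 where d is a uniform bit and the x_i are uniform in F_Q. -/
open Finset

/-- Embed the inputs x₁,…,xₙ (given as a vector) into a function ℕ → F (0 elsewhere). -/
def extendVec {F : Type*} [Field F] (n : ℕ) (v : Fin n → F) : ℕ → F :=
  fun i => if h : 1 ≤ i ∧ i ≤ n then v ⟨i - 1, by omega⟩ else 0

/-- The recursively rolled-up check value: α₀ = d, αᵢ = yᵢ − xᵢ·αᵢ₋₁. -/
def alphaRec {F : Type*} [Field F] (d : F) (x y : ℕ → F) : ℕ → F
  | 0 => d
  | i + 1 => y (i + 1) - x (i + 1) * alphaRec d x y i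

/-- The committed bit viewed as a field element. -/
def bitF (F : Type*) [Field F] (d : Bool) : F := if d then 1 else 0

/-- A valid (relativistic) cheating strategy: the round-1 answer depends only on x₁, and the
round-i answer depends only on d, x₁,…,x_{i−2} and xᵢ. -/
def ValidStrategy {F : Type*} [Field F] (S : ℕ → F → (ℕ → F) → F) : Prop :=
  (∀ d d' x, S 1 d x = S 1 d' x) ∧
  (∀ i d x x', (∀ j, j + 2 ≤ i → x j = x' j) → x i = x' i → S i d x = S i d x')

/-- Winning condition of the m-round protocol P_m: y_m = α_{m−1}. -/
def winP {F : Type*} [Field F] (m : ℕ) (S : ℕ → F → (ℕ → F) → F)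
    (d : Bool) (v : Fin (m - 1) → F) : Prop :=
  let x := extendVec (m - 1) v
  let y := fun i => S i (bitF F d) x
  y m = alphaRec (bitF F d) x y (m - 1)

/-- Winning condition of the symmetrized m-round protocol P'_m: y_m = x_m·α_{m−1}. -/
def winP' {F : Type*} [Field F] (m : ℕ) (S : ℕ → F → (ℕ → F) → F)
    (d : Bool) (v : Fin m → F) : Prop :=
  let x := extendVec m v
  let y := fun i => S i (bitF F d) x
  y m = x m * alphaRec (bitF F d) x y (m - 1)

open scoped Classical in
/-- Winning probability of a strategy in P_m, for uniform d and x₁,…,x_{m−1}. -/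
noncomputable def probP (F : Type*) [Field F] [Fintype F] [DecidableEq F]
    (m : ℕ) (S : ℕ → F → (ℕ → F) → F) : ℝ :=
  ((Finset.univ.filter (fun p : Bool × (Fin (m - 1) → F) => winP m S p.1 p.2)).card : ℝ) /
    (Fintype.card (Bool × (Fin (m - 1) → F)) : ℝ)

open scoped Classical in
/-- Winning probability of a strategy in P'_m, for uniform d and x₁,…,x_m. -/
noncomputable def probP' (F : Type*) [Field F] [Fintype F] [DecidableEq F]
    (m : ℕ) (S : ℕ → F → (ℕ → F) → F) : ℝ :=
  ((Finset.univ.filter (fun p : Bool × (Fin m → F) => winP' m S p.1 p.2)).card : ℝ) /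
    (Fintype.card (Bool × (Fin m → F)) : ℝ)

/-- g_m: Alice's maximal cheating probability in P_m. -/
noncomputable def gP (F : Type*) [Field F] [Fintype F] [DecidableEq F] (m : ℕ) : ℝ :=
  sSup {p : ℝ | ∃ S, ValidStrategy S ∧ p = probP F m S}

/-- g'_m: Alice's maximal cheating probability in P'_m. -/
noncomputable def gP' (F : Type*) [Field F] [Fintype F] [DecidableEq F] (m : ℕ) : ℝ :=
  sSup {p : ℝ | ∃ S, ValidStrategy S ∧ p = probP' F m S}

/-!
Given a strategy `S` for `P_m`, Alice plays the same answers in `P'_m` up to round `m - 1`, and in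
the last round answers `x_m` times the answer `S` would give with `x_m = 0`. Her check values
`α_1, …, α_{m-1}` are then those of `P_m`, so whenever `S` wins `P_m` on `(d, x_1, …, x_{m-1})`,
the new strategy wins `P'_m` on `(d, x_1, …, x_{m-1}, x_m)` for every `x_m`.
-/

section

variable {F : Type*} [Field F]

lemma alphaRec_congr (d : F) {x x' y y' : ℕ → F} (n : ℕ)
    (hx : ∀ i, 1 ≤ i → i ≤ n → x i = x' i) (hy : ∀ i, 1 ≤ i → i ≤ n → y i = y' i) :
    alphaRec d x y n = alphaRec d x' y' n := by
  induction n with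
  | zero => rfl
  | succ n ih =>
    rw [alphaRec, alphaRec, hx (n + 1) (by omega) le_rfl, hy (n + 1) (by omega) le_rfl,
      ih (fun i h1 h2 => hx i h1 (by omega)) (fun i h1 h2 => hy i h1 (by omega))]

lemma extendVec_of_lt {n i : ℕ} (v : Fin n → F) (hi : n < i) : extendVec n v i = 0 :=
  dif_neg (by omega)

lemma extendVec_snoc_of_le {n i : ℕ} (v : Fin n → F) (a : F) (hi : i ≤ n) :
    extendVec (n + 1) (Fin.snoc v a) i = extendVec n v i := by
  by_cases h1 : 1 ≤ i
  · have hlt : i - 1 < n := by omega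
    simp [extendVec, Fin.snoc, h1, hi, hlt, Nat.le_succ_of_le hi]
  · simp [extendVec, h1]

lemma extendVec_snoc_self {n : ℕ} (v : Fin n → F) (a : F) :
    extendVec (n + 1) (Fin.snoc v a) (n + 1) = a := by
  simp [extendVec, Fin.snoc]

lemma update_extendVec_snoc {n : ℕ} (v : Fin n → F) (a : F) :
    Function.update (extendVec (n + 1) (Fin.snoc v a)) (n + 1) 0 = extendVec n v := by
  funext j
  rcases lt_trichotomy j (n + 1) with hj | rfl | hj
  · rw [Function.update_of_ne hj.ne, extendVec_snoc_of_le v a (by omega)]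
  · rw [Function.update_self, extendVec_of_lt v (by omega)]
  · rw [Function.update_of_ne hj.ne', extendVec_of_lt _ hj, extendVec_of_lt v (by omega)]

def symmetrize (m : ℕ) (S : ℕ → F → (ℕ → F) → F) : ℕ → F → (ℕ → F) → F :=
  fun i d x => if i = m then x m * S m d (Function.update x m 0) else S i d x

lemma ValidStrategy.symmetrize {S : ℕ → F → (ℕ → F) → F} (hS : ValidStrategy S) (m : ℕ) :
    ValidStrategy (symmetrize m S) := by
  refine ⟨fun d d' x => ?_, fun i d x x' hx hxi => ?_⟩
  · unfold _root_.symmetrize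
    split_ifs with h
    · subst h
      rw [hS.1 d d']
    · exact hS.1 d d' x
  · unfold _root_.symmetrize
    split_ifs with h
    · subst h
      have hupd : ∀ j, j + 2 ≤ i →
          Function.update x i 0 j = Function.update x' i 0 j := fun j hj => by
        rw [Function.update_of_ne (by omega), Function.update_of_ne (by omega), hx j hj]
      rw [hxi, hS.2 i d _ _ hupd (by simp)]
    · exact hS.2 i d x x' hx hxi

lemma winP'_symmetrize_snoc {S : ℕ → F → (ℕ → F) → F} (hS : ValidStrategy S) {n : ℕ}
    {d : Bool} {v : Fin n → F} (hwin : winP (n + 1) S d v) (a : F) :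
    winP' (n + 1) (symmetrize (n + 1) S) d (Fin.snoc v a) := by
  set D := bitF F d
  set x := extendVec (n + 1) (Fin.snoc v a)
  have hx : ∀ i, i ≤ n → x i = extendVec n v i := fun i hi => extendVec_snoc_of_le v a hi
  have hy : ∀ i, i ≤ n → symmetrize (n + 1) S i D x = S i D (extendVec n v) := fun i hi => by
    rw [symmetrize, if_neg (by omega)]
    exact hS.2 i D _ _ (fun j hj => hx j (by omega)) (hx i hi)
  have hxlast : x (n + 1) = a := extendVec_snoc_self v a
  have hlast : symmetrize (n + 1) S (n + 1) D x = a * S (n + 1) D (extendVec n v) := by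
    rw [symmetrize, if_pos rfl, update_extendVec_snoc, hxlast]
  change symmetrize (n + 1) S (n + 1) D x
    = x (n + 1) * alphaRec D x (fun i => symmetrize (n + 1) S i D x) n
  rw [hlast, hxlast,
    alphaRec_congr D n (fun i _ hi => hx i hi) (fun i _ hi => hy i hi)]
  exact congrArg (a * ·) hwin

end

section

variable {F : Type*} [Field F] [Fintype F]

open scoped Classical in
lemma card_filter_winP_mul_card_le {S : ℕ → F → (ℕ → F) → F} (hS : ValidStrategy S) (n : ℕ) :
    #{p : Bool × (Fin n → F) | winP (n + 1) S p.1 p.2} * Fintype.card F ≤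
      #{p : Bool × (Fin (n + 1) → F) | winP' (n + 1) (symmetrize (n + 1) S) p.1 p.2} := by
  rw [← card_univ (α := F), ← card_product]
  refine card_le_card_of_injOn (fun q => (q.1.1, Fin.snoc q.1.2 q.2)) ?_ ?_
  · rintro ⟨⟨d, v⟩, a⟩ hq
    have hwin : winP (n + 1) S d v := by simpa using hq
    simpa using winP'_symmetrize_snoc hS hwin a
  · rintro ⟨⟨d, v⟩, a⟩ - ⟨⟨d', v'⟩, a'⟩ - h
    obtain ⟨rfl, rfl, rfl⟩ : d = d' ∧ v = v' ∧ a = a' := by simpa using h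
    rfl

variable [DecidableEq F]

lemma probP_le_probP'_symmetrize {S : ℕ → F → (ℕ → F) → F} (hS : ValidStrategy S) (n : ℕ) :
    probP F (n + 1) S ≤ probP' F (n + 1) (symmetrize (n + 1) S) := by
  have hcard : (Fintype.card (Bool × (Fin (n + 1) → F)) : ℝ)
      = Fintype.card (Bool × (Fin n → F)) * Fintype.card F := by
    simp [Fintype.card_prod, pow_succ, mul_assoc]
  have hQ : (0 : ℝ) < Fintype.card F := by exact_mod_cast Fintype.card_pos
  unfold probP probP'
  rw [hcard, ← mul_div_mul_right _ _ hQ.ne']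
  exact div_le_div_of_nonneg_right (by exact_mod_cast card_filter_winP_mul_card_le hS n)
    (by positivity)

lemma probP'_nonneg (m : ℕ) (S : ℕ → F → (ℕ → F) → F) : 0 ≤ probP' F m S := by
  unfold probP'
  positivity

lemma probP'_le_one (m : ℕ) (S : ℕ → F → (ℕ → F) → F) : probP' F m S ≤ 1 :=
  div_le_one_of_le₀ (by exact_mod_cast card_le_univ _) (by positivity)

end

/-- symmetrization, first inequality: g_m ≤ g'_m for all m ≥ 2. -/
theorem gP_le_gP' (F : Type*) [Field F] [Fintype F] [DecidableEq F]
    (m : ℕ) (hm : 2 ≤ m) : gP F m ≤ gP' F m := by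
  obtain ⟨n, rfl⟩ := Nat.exists_eq_add_of_le' (show 1 ≤ m by omega)
  have hbdd : BddAbove {p | ∃ S, ValidStrategy S ∧ p = probP' F (n + 1) S} :=
    ⟨1, by rintro _ ⟨S, -, rfl⟩; exact probP'_le_one _ S⟩
  refine Real.sSup_le ?_ (Real.sSup_nonneg ?_)
  · rintro _ ⟨S, hS, rfl⟩
    exact (probP_le_probP'_symmetrize hS n).trans
      (le_csSup hbdd ⟨_, hS.symmetrize (n + 1), rfl⟩)
  · rintro _ ⟨S, -, rfl⟩
    exact probP'_nonneg _ S
end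

section
/- There exists a cheating strategy for the 3-round symmetrized F_Q protocol P'_3 achieving success probability at least 1 − (1/2)(1 − 1/Q)(1 − ω(CHSH_Q)). Concretely: let s1, s2 : F_Q → F_Q be an optimal strategy for CHSH_Q. Define ỹ_1 = 0, ỹ_2 = d·s2(x_2), ỹ_3 = x_3·d·s1(x_1). Then Pr_{d,x_1,x_2,x_3}[ỹ_3 + x_3·ỹ_2 + x_3·x_2·ỹ_1 = x_3·x_2·x_1·d] ≥ 1 − (1/2)(1 − 1/Q)(1 − ω(CHSH_Q)), where d is a uniform bit (viewed in F_Q) and x_1, x_2, x_3 are independent uniform elements of F_Q. -/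
open Finset

/-! When `d = 0` all answers vanish and the check passes. When `d = 1` it reads
`x₃ · (s1 x₁ + s2 x₂ - x₁ x₂) = 0`, which holds for every `x₃` if `(s1, s2)` wins `CHSH_Q` on
`(x₁, x₂)` and only for `x₃ = 0` otherwise. Counting gives the success probability
`1/2 + (1/2) (1/Q + (1 - 1/Q) · chshProb s1 s2)`, which is the bound for an optimal strategy. -/

theorem card_filter_bool_prod {X : Type*} [Fintype X] (p : Bool × X → Prop) [DecidablePred p] :
    #{ω | p ω} = #{x | p (false, x)} + #{x | p (true, x)} := by
  simp only [card_filter, Fintype.sum_prod_type, Fintype.sum_bool]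
  ring

section
variable {M : Type*} [MulZeroClass M] [IsLeftCancelMulZero M] [Fintype M] [DecidableEq M]

theorem card_filter_mul_eq_mul_left (a b : M) :
    #{c : M | c * a = c * b} = if a = b then Fintype.card M else 1 := by
  split_ifs with h
  · simp [h]
  · rw [card_eq_one]
    exact ⟨0, by ext c; simp [h]⟩

theorem card_filter_prod_mul_eq_mul {α : Type*} [Fintype α] (f g : α → M) :
    (#{p : α × M | p.2 * f p.1 = p.2 * g p.1} : ℝ) =
      Fintype.card α + (Fintype.card M - 1) * #{a | f a = g a} := by
  have fiber (a : α) : ((#{c : M | c * f a = c * g a} : ℕ) : ℝ) =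
      1 + (Fintype.card M - 1) * if f a = g a then 1 else 0 := by
    rw [card_filter_mul_eq_mul_left]
    split_ifs <;> simp
  rw [card_filter, Fintype.sum_prod_type]
  simp only [← card_filter]
  push_cast
  simp only [fiber, sum_add_distrib, ← mul_sum, sum_boole]
  simp

end

theorem card_filter_scaled_chsh_wins {R : Type*} [CommRing R] [IsDomain R] [Fintype R]
    [DecidableEq R] (s1 s2 : R → R) :
    (#{x : R × R × R | x.2.2 * s1 x.1 + x.2.2 * s2 x.2.1 = x.2.2 * x.2.1 * x.1} : ℝ) =
      Fintype.card R ^ 2 + (Fintype.card R - 1) * #{p : R × R | s1 p.1 + s2 p.2 = p.1 * p.2} := by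
  have h := card_filter_prod_mul_eq_mul (fun p : R × R => s1 p.1 + s2 p.2) fun p => p.1 * p.2
  rw [Fintype.card_prod, Nat.cast_mul, ← sq] at h
  rw [← h, card_equiv (Equiv.prodAssoc R R R).symm fun x => ?_]
  simp only [mem_filter_univ, Equiv.prodAssoc_symm_apply]
  constructor <;> intro hx <;> linear_combination hx

/-- using an optimal CHSH_Q strategy (s1, s2), the 3-round strategy
ỹ₁ = 0, ỹ₂ = d·s2(x₂), ỹ₃ = x₃·d·s1(x₁) wins P'₃ (i.e. satisfies
ỹ₃ + x₃·ỹ₂ + x₃·x₂·ỹ₁ = x₃·x₂·x₁·d) with probability at least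
1 − (1/2)(1 − 1/Q)(1 − ω(CHSH_Q)). -/
theorem three_round_attack (F : Type*) [Field F] [Fintype F] [DecidableEq F]
    (s1 s2 : F → F) (hopt : chshProb F s1 s2 = omegaCHSH F) :
    ((Finset.univ.filter (fun ω : Bool × (F × F × F) =>
        let d := bitF F ω.1
        let x1 := ω.2.1
        let x2 := ω.2.2.1
        let x3 := ω.2.2.2
        (x3 * (d * s1 x1)) + x3 * (d * s2 x2) + x3 * x2 * (0 : F)
          = x3 * x2 * x1 * d)).card : ℝ) /
      (Fintype.card (Bool × (F × F × F)) : ℝ)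
    ≥ 1 - (1 / 2) * (1 - 1 / (Fintype.card F : ℝ)) * (1 - omegaCHSH F) := by
  rw [← hopt, ge_iff_le, card_filter_bool_prod]
  simp only [bitF, Bool.false_eq_true, if_false, if_true, mul_zero, zero_mul, add_zero, one_mul,
    mul_one, filter_true]
  rw [Nat.cast_add, card_filter_scaled_chsh_wins, chshProb]
  simp only [card_univ, Fintype.card_prod, Fintype.card_bool, Nat.cast_mul]
  have hQ : (Fintype.card F : ℝ) ≠ 0 := by positivity
  refine le_of_eq ?_
  field_simp
  ring
end

section
/- For every m ≥ 3, the maximal cheating probability g_m of Alice in the m-round F_Q relativistic bit commitment protocol satisfies g_m ≥ 1 − (1/2)·((1 − 1/Q)(1 − ω(CHSH_Q)))^{⌊(m−1)/3⌋}. -/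
open Finset

/-!
Alice answers `0` in the first `g` rounds and splits the remaining ones into blocks of three.
If the block starts from `A = α_n ≠ 0` with inputs `a, b, c`, she answers `0`, then `-s₁ b`,
then `c · s₂ (a A)` (legal: the last answer may see `a`), where `(s₁, s₂)` is an optimal CHSH_Q
strategy; this makes `α_{n+3} = c · (s₁ b + s₂ (a A) - b · a A)`, which vanishes iff `c = 0` or
CHSH is won on `(b, a A)`. Once `α` is `0` she answers `0` and `α` stays `0`, so for `d = 0` she
always wins. For `d = 1`, from any nonzero value a gap round keeps `α ≠ 0` with probability
`1 - 1/Q`, a block with probability `X = (1 - 1/Q)(1 - ω)`, and the final block, whose `c` is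
replaced by `1`, with probability `1 - ω`. For `m = g + 3 (r + 1)` with `g = m mod 3`, Alice thus
loses with probability `½ (1 - 1/Q)^g X^r (1 - ω) ≤ ½ X^⌊(m-1)/3⌋`.
-/

section Transitions

variable {F : Type*} [Field F]

theorem extendVec_append_of_le {n k : ℕ} (w : Fin n → F) (u : Fin k → F) {i : ℕ} (hi : i ≤ n) :
    extendVec (n + k) (Fin.append w u) i = extendVec n w i := by
  unfold extendVec
  by_cases h : 1 ≤ i
  · rw [dif_pos ⟨h, by omega⟩, dif_pos ⟨h, hi⟩]
    exact Fin.append_left w u ⟨i - 1, by omega⟩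
  · rw [dif_neg (by omega), dif_neg (by omega)]

theorem extendVec_append_add {n k : ℕ} (w : Fin n → F) (u : Fin k → F) (i : Fin k) :
    extendVec (n + k) (Fin.append w u) (n + 1 + i) = u i := by
  unfold extendVec
  rw [dif_pos ⟨by omega, by omega⟩, ← Fin.append_right w u i]
  congr 1
  ext
  simp only [Fin.val_natAdd]
  omega

variable [Fintype F] [DecidableEq F]

theorem card_filter_extendVec_add {n k : ℕ} {S : (ℕ → F) → F} (hS : DependsOn S (Set.Iic n))
    {T : F → (Fin k → F) → F} (hT : ∀ u, T 0 u = 0) {κ : ℕ}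
    (hκ : ∀ A, A ≠ 0 → #{u | T A u ≠ 0} = κ) :
    #{v : Fin (n + k) → F |
        T (S (extendVec (n + k) v)) (fun i => extendVec (n + k) v (n + 1 + i)) ≠ 0} =
      #{w : Fin n → F | S (extendVec n w) ≠ 0} * κ := by
  have hfiber (w : Fin n → F) :
      #{u | T (S (extendVec n w)) u ≠ 0} = if S (extendVec n w) ≠ 0 then κ else 0 := by
    split_ifs with h
    · exact hκ _ h
    · simp [not_not.mp h, hT]
  calc _ = #{p : (Fin n → F) × (Fin k → F) | T (S (extendVec n p.1)) p.2 ≠ 0} := by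
        refine card_equiv (Fin.appendEquiv n k).symm fun v => ?_
        obtain ⟨⟨w, u⟩, rfl⟩ := (Fin.appendEquiv n k).surjective v
        have hv : Fin.appendEquiv n k (w, u) = Fin.append w u := rfl
        rw [mem_filter, mem_filter, Equiv.symm_apply_apply]
        simp only [mem_univ, true_and, hv, extendVec_append_add,
          hS fun i hi => extendVec_append_of_le w u hi]
    _ = ∑ w : Fin n → F, #{u | T (S (extendVec n w)) u ≠ 0} := by
        simp only [card_filter, Fintype.sum_prod_type]
    _ = _ := by
        rw [card_filter, sum_mul]
        simp only [hfiber, ite_mul, one_mul, zero_mul]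

end Transitions

section Attack

variable {F : Type*} [Field F]

def gapState (x : ℕ → F) (D : F) : ℕ → F
  | 0 => D
  | t + 1 => -(x (t + 1) * gapState x D t)

theorem gapState_dependsOn (D : F) (t : ℕ) :
    DependsOn (fun x => gapState x D t) (Set.Iic t) := by
  induction t with
  | zero => exact fun _ _ _ => rfl
  | succ t ih =>
    intro x y h
    simp only [gapState, h (t + 1) Set.self_mem_Iic,
      ih fun i hi => h i (Set.Iic_subset_Iic.mpr t.le_succ hi)]

theorem alphaRec_dependsOn (D : F) (y : ℕ → F) (n : ℕ) :
    DependsOn (fun x => alphaRec D x y n) (Set.Iic n) := by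
  induction n with
  | zero => exact fun _ _ _ => rfl
  | succ n ih =>
    intro x x' h
    simp only [alphaRec, h (n + 1) Set.self_mem_Iic,
      ih fun i hi => h i (Set.Iic_subset_Iic.mpr n.le_succ hi)]

theorem ValidStrategy.update {S : ℕ → F → (ℕ → F) → F} (hS : ValidStrategy S) (m : ℕ) (c : F) :
    ValidStrategy fun i D x => S i D (Function.update x m c) := by
  refine ⟨fun D D' x => hS.1 D D' _, fun i D x x' hx hxi => hS.2 i D _ _ (fun j hj => ?_) ?_⟩
  · simp only [Function.update_apply, hx j hj]
  · simp only [Function.update_apply, hxi]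

variable [DecidableEq F] (s1 s2 : F → F)

def chshDefect (A a b : F) : F :=
  if A = 0 then 0 else s1 b + s2 (a * A) - b * (a * A)

def blockState (g : ℕ) (x : ℕ → F) (D : F) : ℕ → F
  | 0 => gapState x D g
  | j + 1 => x (g + 3 * j + 3) *
      chshDefect s1 s2 (blockState g x D j) (x (g + 3 * j + 1)) (x (g + 3 * j + 2))

def blockDefect (g : ℕ) (x : ℕ → F) (D : F) (j : ℕ) : F :=
  chshDefect s1 s2 (blockState s1 s2 g x D j) (x (g + 3 * j + 1)) (x (g + 3 * j + 2))

theorem blockState_succ (g : ℕ) (x : ℕ → F) (D : F) (j : ℕ) :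
    blockState s1 s2 g x D (j + 1) = x (g + 3 * j + 3) * blockDefect s1 s2 g x D j :=
  rfl

def blockMove (p : ℕ) (A a z : F) : F :=
  if A = 0 then 0 else if p = 1 then -s1 z else if p = 2 then z * s2 (a * A) else 0

def blockStrategy (g i : ℕ) (D : F) (x : ℕ → F) : F :=
  if i ≤ g then 0
  else blockMove s1 s2 ((i - g - 1) % 3) (blockState s1 s2 g x D ((i - g - 1) / 3)) (x (i - 2))
    (x i)

-- Reading `x m` as `1` turns the last round of `P_m` into the third round of a block, whose
-- check `y_m = α_{m-1}` is then `α_m = 0`.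
def attackStrategy (g m : ℕ) : ℕ → F → (ℕ → F) → F :=
  fun i D x => blockStrategy s1 s2 g i D (Function.update x m 1)

theorem blockState_dependsOn (g : ℕ) (D : F) (j : ℕ) :
    DependsOn (fun x => blockState s1 s2 g x D j) (Set.Iic (g + 3 * j)) := by
  induction j with
  | zero => exact gapState_dependsOn D g
  | succ j ih =>
    intro x y h
    have h' : ∀ i ≤ g + 3 * j + 3, x i = y i := fun i hi => h i (by simp only [Set.mem_Iic]; omega)
    simp only [blockState, h' _ le_rfl, h' (g + 3 * j + 1) (by omega),
      h' (g + 3 * j + 2) (by omega), ih fun i hi => h' i (by simp only [Set.mem_Iic] at hi; omega)]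

theorem blockDefect_dependsOn (g : ℕ) (D : F) (j : ℕ) :
    DependsOn (fun x => blockDefect s1 s2 g x D j) (Set.Iic (g + 3 * j + 2)) := by
  intro x y h
  simp only [Set.mem_Iic] at h
  have hA : blockState s1 s2 g x D j = blockState s1 s2 g y D j :=
    blockState_dependsOn s1 s2 g D j fun i hi => h i (by simp only [Set.mem_Iic] at hi; omega)
  simp only [blockDefect, hA, h _ (by omega : g + 3 * j + 1 ≤ g + 3 * j + 2), h _ le_rfl]

theorem blockStrategy_of_le {g i : ℕ} (hi : i ≤ g) (D : F) (x : ℕ → F) :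
    blockStrategy s1 s2 g i D x = 0 :=
  if_pos hi

theorem blockStrategy_of_eq_add {g i j p : ℕ} (hi : i = g + 3 * j + p + 1) (hp : p < 3) (D : F)
    (x : ℕ → F) :
    blockStrategy s1 s2 g i D x =
      blockMove s1 s2 p (blockState s1 s2 g x D j) (x (i - 2)) (x i) := by
  rw [blockStrategy, if_neg (by omega), show (i - g - 1) % 3 = p by omega,
    show (i - g - 1) / 3 = j by omega]

theorem blockStrategy_valid (g : ℕ) : ValidStrategy (blockStrategy s1 s2 g) := by
  have hfirst (D : F) (x : ℕ → F) : blockStrategy s1 s2 g 1 D x = 0 := by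
    rcases Nat.eq_zero_or_pos g with rfl | hg
    · rw [blockStrategy_of_eq_add s1 s2 (j := 0) (p := 0) rfl (by norm_num)]
      simp [blockMove]
    · exact blockStrategy_of_le s1 s2 hg D x
  refine ⟨fun D D' x => by rw [hfirst, hfirst], fun i D x x' hx hxi => ?_⟩
  unfold blockStrategy
  split_ifs with hig
  · rfl
  set p := (i - g - 1) % 3
  set j := (i - g - 1) / 3
  by_cases hp : p = 0
  · simp [blockMove, hp]
  · have hA : blockState s1 s2 g x D j = blockState s1 s2 g x' D j :=
      blockState_dependsOn s1 s2 g D j fun k hk => hx k (by simp only [Set.mem_Iic] at hk; omega)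
    rw [hA, hx (i - 2) (by omega), hxi]

theorem alphaRec_blockStrategy_of_le (g : ℕ) (D : F) (x : ℕ → F) {t : ℕ} (ht : t ≤ g) :
    alphaRec D x (fun i => blockStrategy s1 s2 g i D x) t = gapState x D t := by
  induction t with
  | zero => rfl
  | succ t ih =>
    rw [alphaRec, ih (by omega), blockStrategy_of_le s1 s2 ht, gapState, zero_sub]

theorem alphaRec_blockStrategy (g : ℕ) (D : F) (x : ℕ → F) (j : ℕ) :
    alphaRec D x (fun i => blockStrategy s1 s2 g i D x) (g + 3 * j) = blockState s1 s2 g x D j := by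
  induction j with
  | zero => exact alphaRec_blockStrategy_of_le s1 s2 g D x le_rfl
  | succ j ih =>
    set n := g + 3 * j
    set A := blockState s1 s2 g x D j
    have h1 : blockStrategy s1 s2 g (n + 1) D x = 0 := by
      rw [blockStrategy_of_eq_add s1 s2 (i := n + 1) (j := j) (p := 0) rfl (by norm_num)]
      simp [blockMove]
    have h2 : blockStrategy s1 s2 g (n + 2) D x = if A = 0 then 0 else -s1 (x (n + 2)) := by
      rw [blockStrategy_of_eq_add s1 s2 (i := n + 2) (j := j) (p := 1) rfl (by norm_num)]
      simp [blockMove, A]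
    have h3 : blockStrategy s1 s2 g (n + 3) D x =
        if A = 0 then 0 else x (n + 3) * s2 (x (n + 1) * A) := by
      rw [blockStrategy_of_eq_add s1 s2 (i := n + 3) (j := j) (p := 2) rfl (by norm_num)]
      simp [blockMove, A]
    rw [show g + 3 * (j + 1) = n + 3 by omega]
    simp only [alphaRec, h1, h2, h3, ih, blockState, chshDefect]
    split_ifs with hA
    · simp [hA]
    · ring

theorem attackStrategy_wins_iff {g r m : ℕ} (hm : m = g + 3 * (r + 1)) (D : F) (x : ℕ → F) :
    attackStrategy s1 s2 g m m D x =
        alphaRec D x (fun i => attackStrategy s1 s2 g m i D x) (m - 1) ↔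
      blockDefect s1 s2 g x D r = 0 := by
  set x' := Function.update x m 1
  set y := fun i => blockStrategy s1 s2 g i D x'
  have hx' : ∀ i < m, x' i = x i := fun i hi => Function.update_of_ne hi.ne _ _
  have hprev : alphaRec D x' y (m - 1) = alphaRec D x y (m - 1) :=
    alphaRec_dependsOn D y (m - 1) fun i hi => hx' i (by simp only [Set.mem_Iic] at hi; omega)
  have hlast : alphaRec D x' y m = y m - alphaRec D x' y (m - 1) := by
    obtain ⟨n, rfl⟩ : ∃ n, m = n + 1 := ⟨m - 1, by omega⟩
    simp [alphaRec, x']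
  have hblock : alphaRec D x' y m = blockDefect s1 s2 g x D r := by
    have hr : blockState s1 s2 g x' D r = blockState s1 s2 g x D r :=
      blockState_dependsOn s1 s2 g D r fun i hi => hx' i (by simp only [Set.mem_Iic] at hi; omega)
    have hm' : x' (g + 3 * r + 3) = 1 := by
      rw [show g + 3 * r + 3 = m by omega]
      exact Function.update_self m 1 x
    rw [hm, alphaRec_blockStrategy, blockState_succ, hm', one_mul, blockDefect, blockDefect, hr,
      hx' _ (by omega), hx' _ (by omega)]
  change y m = alphaRec D x y (m - 1) ↔ _
  rw [← hprev, ← sub_eq_zero, ← hlast, hblock]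

end Attack

section Counting

variable {F : Type*} [Field F] [Fintype F] [DecidableEq F] (s1 s2 : F → F)

def chshLossCount : ℕ := #{p : F × F | s1 p.1 + s2 p.2 ≠ p.1 * p.2}

theorem card_fin_one_mul_ne_zero {A : F} (hA : A ≠ 0) :
    #{u : Fin 1 → F | u 0 * A ≠ 0} = Fintype.card F - 1 := by
  rw [card_equiv (Equiv.funUnique (Fin 1) F) (t := univ.erase 0) (by simp [hA]),
    card_erase_of_mem (mem_univ 0), card_univ]

theorem card_chshDefect_ne_zero {A : F} (hA : A ≠ 0) :
    #{u : Fin 2 → F | chshDefect s1 s2 A (u 0) (u 1) ≠ 0} = chshLossCount s1 s2 := by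
  let e : (Fin 2 → F) ≃ F × F := (finTwoArrowEquiv F).trans
    ((Equiv.prodComm F F).trans ((Equiv.refl F).prodCongr (Equiv.mulRight₀ A hA)))
  exact card_equiv e fun u => by simp [e, chshDefect, hA, sub_eq_zero]

theorem card_gapState_ne_zero (D : F) (t : ℕ) :
    #{w : Fin t → F | gapState (extendVec t w) D t ≠ 0} =
      if D = 0 then 0 else (Fintype.card F - 1) ^ t := by
  induction t with
  | zero => split_ifs with hD <;> simp [gapState, hD]
  | succ t ih =>
    have hκ (A : F) (hA : A ≠ 0) : #{u : Fin 1 → F | -(u 0 * A) ≠ 0} = Fintype.card F - 1 := by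
      simpa only [ne_eq, neg_eq_zero] using card_fin_one_mul_ne_zero hA
    refine (card_filter_extendVec_add (gapState_dependsOn D t) (T := fun A u => -(u 0 * A))
      (by simp) hκ).trans ?_
    rw [ih, pow_succ]
    split_ifs <;> simp

theorem card_blockState_ne_zero (g : ℕ) (D : F) (j : ℕ) :
    #{w : Fin (g + 3 * j) → F | blockState s1 s2 g (extendVec (g + 3 * j) w) D j ≠ 0} =
      if D = 0 then 0
      else (Fintype.card F - 1) ^ g * (chshLossCount s1 s2 * (Fintype.card F - 1)) ^ j := by
  induction j with
  | zero =>
    rw [pow_zero, mul_one]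
    exact card_gapState_ne_zero D g
  | succ j ih =>
    rw [show g + 3 * (j + 1) = g + 3 * j + 2 + 1 by ring]
    refine (card_filter_extendVec_add (blockDefect_dependsOn s1 s2 g D j)
      (T := fun A u => u 0 * A) (by simp)
      fun A hA => card_fin_one_mul_ne_zero hA).trans ?_
    refine (congrArg (· * (Fintype.card F - 1)) (card_filter_extendVec_add
      (blockState_dependsOn s1 s2 g D j) (T := fun A u => chshDefect s1 s2 A (u 0) (u 1))
      (by simp [chshDefect]) fun A hA => card_chshDefect_ne_zero s1 s2 hA)).trans ?_
    rw [ih, pow_succ]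
    split_ifs <;> ring

theorem card_blockDefect_ne_zero (g r : ℕ) (D : F) {N : ℕ} (hN : N = g + 3 * r + 2) :
    #{v : Fin N → F | blockDefect s1 s2 g (extendVec N v) D r ≠ 0} =
      (if D = 0 then 0
      else (Fintype.card F - 1) ^ g * (chshLossCount s1 s2 * (Fintype.card F - 1)) ^ r) *
        chshLossCount s1 s2 := by
  subst hN
  rw [← card_blockState_ne_zero]
  exact card_filter_extendVec_add (blockState_dependsOn s1 s2 g D r)
    (T := fun A u => chshDefect s1 s2 A (u 0) (u 1)) (by simp [chshDefect])
    fun A hA => card_chshDefect_ne_zero s1 s2 hA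

end Counting

section Probability

variable {F : Type*} [Field F] [Fintype F] [DecidableEq F]

theorem one_sub_chshProb (s1 s2 : F → F) :
    1 - chshProb F s1 s2 = chshLossCount s1 s2 / (Fintype.card F : ℝ) ^ 2 := by
  have hsplit := card_filter_add_card_filter_not (s := (univ : Finset (F × F)))
    fun p => s1 p.1 + s2 p.2 = p.1 * p.2
  rw [card_univ, Fintype.card_prod] at hsplit
  rw [chshProb, chshLossCount, eq_div_iff (by positivity), sub_mul,
    div_mul_cancel₀ _ (by positivity)]
  have hsplit' := congrArg (Nat.cast (R := ℝ)) hsplit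
  push_cast at hsplit'
  linarith

theorem exists_chshProb_eq_omegaCHSH : ∃ s1 s2 : F → F, omegaCHSH F = chshProb F s1 s2 := by
  have hfin : {p : ℝ | ∃ s1 s2 : F → F, p = chshProb F s1 s2}.Finite :=
    (Set.finite_range fun s : (F → F) × (F → F) => chshProb F s.1 s.2).subset
      (by rintro _ ⟨s1, s2, rfl⟩; exact ⟨(s1, s2), rfl⟩)
  have hne : {p : ℝ | ∃ s1 s2 : F → F, p = chshProb F s1 s2}.Nonempty := ⟨_, id, id, rfl⟩
  exact hne.csSup_mem hfin

theorem probP_le_gP {m : ℕ} {S : ℕ → F → (ℕ → F) → F} (hS : ValidStrategy S) :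
    probP F m S ≤ gP F m := by
  refine le_csSup ⟨1, ?_⟩ ⟨S, hS, rfl⟩
  rintro _ ⟨S', -, rfl⟩
  exact div_le_one_of_le₀ (by exact_mod_cast card_le_univ _) (by positivity)

open scoped Classical in
theorem card_not_winP_attackStrategy (s1 s2 : F → F) {g r m : ℕ} (hm : m = g + 3 * (r + 1)) :
    #{p : Bool × (Fin (m - 1) → F) | ¬ winP m (attackStrategy s1 s2 g m) p.1 p.2} =
      (Fintype.card F - 1) ^ g * (chshLossCount s1 s2 * (Fintype.card F - 1)) ^ r *
        chshLossCount s1 s2 := by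
  have hloss (d : Bool) : #{v : Fin (m - 1) → F | ¬ winP m (attackStrategy s1 s2 g m) d v} =
      (if bitF F d = 0 then 0
      else (Fintype.card F - 1) ^ g * (chshLossCount s1 s2 * (Fintype.card F - 1)) ^ r) *
        chshLossCount s1 s2 := by
    rw [← card_blockDefect_ne_zero s1 s2 g r (bitF F d) (N := m - 1) (by omega)]
    exact congrArg card (filter_congr fun v _ => not_congr (attackStrategy_wins_iff s1 s2 hm _ _))
  rw [card_filter, Fintype.sum_prod_type, Fintype.sum_bool, ← card_filter, ← card_filter, hloss,
    hloss]
  simp [bitF]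

theorem probP_attackStrategy (s1 s2 : F → F) {g r m : ℕ} (hm : m = g + 3 * (r + 1)) :
    probP F m (attackStrategy s1 s2 g m) = 1 - (1 / 2) *
      ((1 - 1 / (Fintype.card F : ℝ)) ^ g *
        ((1 - 1 / (Fintype.card F : ℝ)) * (1 - chshProb F s1 s2)) ^ r *
          (1 - chshProb F s1 s2)) := by
  classical
  have hQ : 0 < Fintype.card F := Fintype.card_pos
  have hQ' : (Fintype.card F : ℝ) ≠ 0 := by positivity
  have hsplit := card_filter_add_card_filter_not (s := univ)
    fun p : Bool × (Fin (m - 1) → F) => winP m (attackStrategy s1 s2 g m) p.1 p.2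
  rw [card_not_winP_attackStrategy s1 s2 hm, card_univ] at hsplit
  have hwin := congrArg (Nat.cast (R := ℝ)) hsplit
  push_cast [Nat.cast_sub hQ] at hwin
  have hcard : (Fintype.card (Bool × (Fin (m - 1) → F)) : ℝ) =
      2 * (Fintype.card F : ℝ) ^ (g + 3 * r + 2) := by
    simp [Fintype.card_prod, show m - 1 = g + 3 * r + 2 by omega]
  rw [probP, eq_sub_of_add_eq hwin, hcard, one_sub_chshProb, one_sub_div hQ', div_mul_div_comm,
    div_pow, div_pow]
  field_simp
  ring

end Probability

theorem pow_mul_pow_mul_le_pow_div_three {p k : ℝ} (hp0 : 0 ≤ p) (hp1 : p ≤ 1) (hk0 : 0 ≤ k)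
    (hk1 : k ≤ 1) {g r m : ℕ} (hg : g < 3) (hm : m = g + 3 * (r + 1)) :
    p ^ g * (p * k) ^ r * k ≤ (p * k) ^ ((m - 1) / 3) := by
  have hX : 0 ≤ (p * k) ^ r := by positivity
  interval_cases g
  · rw [show (m - 1) / 3 = r by omega, pow_zero, one_mul]
    exact mul_le_of_le_one_right hX hk1
  · rw [show (m - 1) / 3 = r + 1 by omega]
    exact le_of_eq (by ring)
  · rw [show (m - 1) / 3 = r + 1 by omega]
    calc p ^ 2 * (p * k) ^ r * k = p * (p * k) ^ (r + 1) := by ring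
      _ ≤ (p * k) ^ (r + 1) := mul_le_of_le_one_left (by positivity) hp1

/-- for every m ≥ 3, Alice's maximal cheating probability in the m-round
F_Q protocol satisfies g_m ≥ 1 − (1/2)·((1 − 1/Q)(1 − ω(CHSH_Q)))^⌊(m−1)/3⌋. -/
theorem main_attack_bound (F : Type*) [Field F] [Fintype F] [DecidableEq F]
    (m : ℕ) (hm : 3 ≤ m) :
    gP F m ≥ 1 - (1 / 2) *
      ((1 - 1 / (Fintype.card F : ℝ)) * (1 - omegaCHSH F)) ^ ((m - 1) / 3) := by
  obtain ⟨s1, s2, hω⟩ := exists_chshProb_eq_omegaCHSH (F := F)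
  have hm' : m = m % 3 + 3 * (m / 3 - 1 + 1) := by omega
  have hQ : (1 : ℝ) ≤ Fintype.card F := by exact_mod_cast Fintype.card_pos
  have hp0 : 0 ≤ 1 - 1 / (Fintype.card F : ℝ) := by
    rw [sub_nonneg]; exact div_le_one_of_le₀ hQ (by positivity)
  have hk0 : 0 ≤ 1 - chshProb F s1 s2 := by rw [one_sub_chshProb]; positivity
  have hk1 : 1 - chshProb F s1 s2 ≤ 1 :=
    sub_le_self _ (div_nonneg (Nat.cast_nonneg _) (by positivity))
  rw [hω, ge_iff_le]
  calc _ ≤ 1 - (1 / 2) * ((1 - 1 / (Fintype.card F : ℝ)) ^ (m % 3) *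
        ((1 - 1 / (Fintype.card F : ℝ)) * (1 - chshProb F s1 s2)) ^ (m / 3 - 1) *
          (1 - chshProb F s1 s2)) := by
        gcongr
        exact pow_mul_pow_mul_le_pow_div_three hp0 (sub_le_self _ (by positivity)) hk0 hk1
          (Nat.mod_lt m (by norm_num)) hm'
    _ = probP F m (attackStrategy s1 s2 (m % 3) m) := (probP_attackStrategy s1 s2 hm').symm
    _ ≤ gP F m := probP_le_gP ((blockStrategy_valid s1 s2 _).update m 1)
end
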